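/- There is an absolute constant C such that for all nonnegative locally integrable functions f, g : ℝ → [0,∞), one has the pointwise estimate M_D(f,g)(x) ≤ C · M₁(f · M₁g)(x) for every x ∈ ℝ. -/

import Mathlib

open MeasureTheory Set Real
open scoped ENNReal NNReal

/-- The one-dimensional centered Hardy–Littlewood maximal operator, acting on
nonnegative (extended-real-valued) functions:
`M₁ F x = sup_{r > 0} (1/(2r)) ∫_{x-r}^{x+r} F(s) ds`. -/
noncomputable def M1 (F : ℝ → ℝ≥0∞) (x : ℝ) : ℝ≥0∞ :=
  ⨆ (r : ℝ) (_ : 0 < r),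
    (∫⁻ s in Icc (x - r) (x + r), F s) / ENNReal.ofReal (2 * r)

/-- The parallelogram `P_{x,l,w}` with vertices `(x±l, x±l±w)`: its two
vertical sides have length `2w` and its other two sides are parallel to the
diagonal `D = {(t,t) : t ∈ ℝ}` . -/
def para (x l w : ℝ) : Set (ℝ × ℝ) :=
  {p | |p.1 - x| ≤ l ∧ |p.2 - p.1| ≤ w}

/-- The diagonal bilinear maximal operator
`M_D(f,g)(x) = sup_{l,w > 0} (1/|P_{x,l,w}|) ∫_{P_{x,l,w}} |f(y) g(z)| dy dz`. -/
noncomputable def MD (f g : ℝ → ℝ) (x : ℝ) : ℝ≥0∞ :=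
  ⨆ (l : ℝ) (_ : 0 < l) (w : ℝ) (_ : 0 < w),
    (∫⁻ p in para x l w, ENNReal.ofReal |f p.1 * g p.2|) / volume (para x l w)

/-! Over a point `y` with `|y - x| ≤ l`, the vertical fibre of `P_{x,l,w}` is
`[y - w, y + w]`, so integrating `g` along it gives at most `2w · M₁g(y)`. What is left is
the integral of `f · M₁g` over `[x - l, x + l]`, at most `2l · M₁(f · M₁g)(x)`. The shear
`(y, z) ↦ (y, z - y)` maps `P_{x,l,w}` onto a rectangle, so `|P_{x,l,w}| = 2l · 2w` and the
estimate holds with `C = 1`. -/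

lemma para_eq_preimage (x l w : ℝ) :
    para x l w = (fun p : ℝ × ℝ => (p.1, p.2 - p.1)) ⁻¹'
      (Metric.closedBall x l ×ˢ Metric.closedBall 0 w) := by
  ext p
  simp [para, Real.dist_eq]

lemma measurableSet_para (x l w : ℝ) : MeasurableSet (para x l w) := by
  rw [para_eq_preimage]
  exact (measurableSet_closedBall.prod measurableSet_closedBall).preimage (by fun_prop)

lemma volume_para (x l w : ℝ) :
    volume (para x l w) = ENNReal.ofReal (2 * l) * ENNReal.ofReal (2 * w) := by
  rw [para_eq_preimage, Measure.volume_eq_prod,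
    (measurePreserving_prod_sub volume volume).measure_preimage
    (measurableSet_closedBall.prod measurableSet_closedBall).nullMeasurableSet,
    Measure.prod_prod, Real.volume_closedBall, Real.volume_closedBall]

lemma indicator_para_apply (H : ℝ × ℝ → ℝ≥0∞) (x l w y z : ℝ) :
    (para x l w).indicator H (y, z) = (Icc (x - l) (x + l)).indicator
      (fun y => (Icc (y - w) (y + w)).indicator (fun z => H (y, z)) z) y := by
  simp only [indicator, para, mem_Icc, abs_le]
  split_ifs <;> grind

/-- Only an upper bound: Tonelli's inequality `lintegral_prod_le` needs no measurability. -/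
lemma setLIntegral_para_le (H : ℝ × ℝ → ℝ≥0∞) (x l w : ℝ) :
    ∫⁻ p in para x l w, H p ≤
      ∫⁻ y in Icc (x - l) (x + l), ∫⁻ z in Icc (y - w) (y + w), H (y, z) := by
  rw [← lintegral_indicator (measurableSet_para x l w), Measure.volume_eq_prod,
    ← lintegral_indicator measurableSet_Icc]
  refine (lintegral_prod_le _).trans_eq (lintegral_congr fun y => ?_)
  by_cases hy : y ∈ Icc (x - l) (x + l) <;>
    simp [indicator_para_apply, hy, lintegral_indicator measurableSet_Icc]

lemma setLIntegral_Icc_le_M1_mul (F : ℝ → ℝ≥0∞) (x : ℝ) {r : ℝ} (hr : 0 < r) :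
    ∫⁻ s in Icc (x - r) (x + r), F s ≤ M1 F x * ENNReal.ofReal (2 * r) :=
  (ENNReal.div_le_iff (by simpa using hr) ENNReal.ofReal_ne_top).1 <|
    le_iSup₂ (f := fun r (_ : 0 < r) =>
      (∫⁻ s in Icc (x - r) (x + r), F s) / ENNReal.ofReal (2 * r)) r hr

lemma setLIntegral_para_mul_le (f g : ℝ → ℝ≥0∞) (hf : ∀ y, f y ≠ ∞) (x : ℝ) {l w : ℝ}
    (hl : 0 < l) (hw : 0 < w) :
    ∫⁻ p in para x l w, f p.1 * g p.2 ≤ M1 (fun t => f t * M1 g t) x * volume (para x l w) :=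
  calc ∫⁻ p in para x l w, f p.1 * g p.2
      ≤ ∫⁻ y in Icc (x - l) (x + l), ∫⁻ z in Icc (y - w) (y + w), f y * g z :=
        setLIntegral_para_le _ x l w
    _ = ∫⁻ y in Icc (x - l) (x + l), f y * ∫⁻ z in Icc (y - w) (y + w), g z := by
        simp_rw [lintegral_const_mul' _ _ (hf _)]
    _ ≤ ∫⁻ y in Icc (x - l) (x + l), f y * M1 g y * ENNReal.ofReal (2 * w) := by
        refine lintegral_mono fun y => ?_
        rw [mul_assoc]
        gcongr
        exact setLIntegral_Icc_le_M1_mul g y hw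
    _ = (∫⁻ y in Icc (x - l) (x + l), f y * M1 g y) * ENNReal.ofReal (2 * w) :=
        lintegral_mul_const' _ _ ENNReal.ofReal_ne_top
    _ ≤ M1 (fun t => f t * M1 g t) x * ENNReal.ofReal (2 * l) * ENNReal.ofReal (2 * w) := by
        gcongr
        exact setLIntegral_Icc_le_M1_mul _ x hl
    _ = M1 (fun t => f t * M1 g t) x * volume (para x l w) := by
        rw [volume_para, mul_assoc]

lemma MD_le_M1_mul_M1_of_nonneg {f g : ℝ → ℝ} (hf : ∀ x, 0 ≤ f x) (hg : ∀ x, 0 ≤ g x)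
    (x : ℝ) :
    MD f g x ≤ M1 (fun t => ENNReal.ofReal (f t) * M1 (fun s => ENNReal.ofReal (g s)) t) x := by
  refine iSup₂_le fun l hl => iSup₂_le fun w hw => ?_
  rw [ENNReal.div_le_iff (by simp [volume_para, hl, hw])
    (by simp [volume_para, ENNReal.mul_eq_top])]
  have hprod : ∀ p : ℝ × ℝ,
      ENNReal.ofReal |f p.1 * g p.2| = ENNReal.ofReal (f p.1) * ENNReal.ofReal (g p.2) :=
    fun p => by rw [abs_of_nonneg (mul_nonneg (hf _) (hg _)), ENNReal.ofReal_mul (hf _)]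
  simp_rw [hprod]
  exact setLIntegral_para_mul_le _ _ (fun _ => ENNReal.ofReal_ne_top) x hl hw

/-- For nonnegative locally integrable `f, g`, the pointwise estimate
`M_D(f,g)(x) ≤ C · M₁(f · M₁ g)(x)` holds. -/
theorem MD_le_M1_mul_M1 :
    ∃ C : ℝ, 0 < C ∧
      ∀ f g : ℝ → ℝ, (∀ x, 0 ≤ f x) → (∀ x, 0 ≤ g x) →
        LocallyIntegrable f volume → LocallyIntegrable g volume →
        ∀ x : ℝ,
          MD f g x ≤
            ENNReal.ofReal C *
              M1 (fun t => ENNReal.ofReal (f t) *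
                M1 (fun s => ENNReal.ofReal (g s)) t) x :=
  ⟨1, one_pos, fun _ _ hf hg _ _ x => by
    simpa using MD_le_M1_mul_M1_of_nonneg hf hg x⟩
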